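/- For all nonnegative integers i, j, N, the following two products of quantum binomials are equal: [i+j choose i]_q [N−1−(i+j) choose N−i]_q [−1 choose i]_q [N choose j]_q = [i+j choose j]_q [N−1−(i+j) choose N−j]_q [−1 choose j]_q [N choose i]_q. (This is the symmetry in i and j used in the proof of invariance of Q_{N|1} under conjugation by σ₁.) -/

import Mathlib

open Finset

noncomputable def q : RatFunc ℚ := RatFunc.X

noncomputable def qint (n : ℤ) : RatFunc ℚ := (q ^ n - q ^ (-n)) / (q - q⁻¹)

noncomputable def qbin (n k : ℤ) : RatFunc ℚ :=
  if k < 0 then 0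
  else (∏ i ∈ Finset.range k.toNat, qint (n - i)) /
       (∏ i ∈ Finset.range k.toNat, qint (i + 1))

/-! When `i ≤ N`, `j ≤ N` and `N ≤ i + j`, the upper index `N - 1 - (i + j)` is negative, and the
reflection `[-n-1 choose k] = (-1)^k [n+k choose k]` turns both sides into
`(-1)^N [i+j]! [N]! / ([i]! [j]! [N-i]! [N-j]! [i+j-N]!)`, which is symmetric in `i` and `j`.
Otherwise one of the factors vanishes on each side. -/

noncomputable def qfactorial (k : ℕ) : RatFunc ℚ := ∏ s ∈ range k, qint (s + 1)

lemma q_ne_zero : q ≠ 0 := RatFunc.X_ne_zero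

lemma intDegree_q_zpow (m : ℤ) : (q ^ m).intDegree = m := by
  have hq : q.intDegree = 1 := RatFunc.intDegree_X
  induction m using Int.induction_on with
  | zero => simp
  | succ n ih =>
    rw [zpow_add_one₀ q_ne_zero, RatFunc.intDegree_mul (zpow_ne_zero _ q_ne_zero) q_ne_zero,
      ih, hq]
  | pred n ih =>
    rw [zpow_sub_one₀ q_ne_zero,
      RatFunc.intDegree_mul (zpow_ne_zero _ q_ne_zero) (inv_ne_zero q_ne_zero), ih,
      RatFunc.intDegree_inv, hq, sub_eq_add_neg]

lemma q_zpow_injective : Function.Injective (q ^ · : ℤ → RatFunc ℚ) := fun m n h => by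
  simpa only [intDegree_q_zpow] using congrArg RatFunc.intDegree h

lemma qint_ne_zero {n : ℤ} (hn : n ≠ 0) : qint n ≠ 0 := by
  have hnum : q ^ n - q ^ (-n) ≠ 0 :=
    sub_ne_zero.mpr fun h => hn (by have := q_zpow_injective h; omega)
  have hden : q - q⁻¹ ≠ 0 :=
    sub_ne_zero.mpr fun h => by
      have := @q_zpow_injective 1 (-1) (by simpa only [zpow_one, zpow_neg] using h)
      omega
  exact div_ne_zero hnum hden

lemma qint_neg (n : ℤ) : qint (-n) = -qint n := by
  rw [qint, qint, neg_neg, ← neg_sub, neg_div]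

lemma qfactorial_ne_zero (k : ℕ) : qfactorial k ≠ 0 :=
  prod_ne_zero_iff.mpr fun s _ => qint_ne_zero (by omega)

lemma qfactorial_zero : qfactorial 0 = 1 := prod_range_zero _

lemma qfactorial_add (m k : ℕ) :
    qfactorial (m + k) = qfactorial m * ∏ s ∈ range k, qint (m + 1 + s) := by
  rw [qfactorial, prod_range_add]
  congr 1
  exact prod_congr rfl fun s _ => by push_cast; ring_nf

lemma prod_range_qint_reflect (n : ℤ) (k : ℕ) :
    ∏ s ∈ range k, qint (n + k - s) = ∏ s ∈ range k, qint (n + 1 + s) := by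
  rw [← prod_range_reflect (fun s : ℕ => qint (n + 1 + s)) k]
  exact prod_congr rfl fun s hs => by
    rw [mem_range] at hs
    congr 1
    omega

lemma qbin_of_neg {n k : ℤ} (hk : k < 0) : qbin n k = 0 := if_pos hk

lemma qbin_natCast_right (n : ℤ) (k : ℕ) :
    qbin n k = (∏ s ∈ range k, qint (n - s)) / qfactorial k := by
  simp [qbin, qfactorial]

lemma qbin_natCast_of_lt {m k : ℕ} (h : m < k) : qbin m k = 0 := by
  rw [qbin_natCast_right, prod_eq_zero (mem_range.mpr h) (by simp [qint]), zero_div]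

lemma qbin_natCast_of_le {m k : ℕ} (h : k ≤ m) :
    qbin m k = qfactorial m / (qfactorial k * qfactorial (m - k)) := by
  obtain ⟨d, rfl⟩ := Nat.exists_eq_add_of_le' h
  have hd := qfactorial_ne_zero d
  rw [qbin_natCast_right, Nat.add_sub_cancel, qfactorial_add, Nat.cast_add,
    prod_range_qint_reflect]
  field_simp

lemma qbin_neg_sub_one (n : ℤ) (k : ℕ) : qbin (-n - 1) k = (-1) ^ k * qbin (n + k) k := by
  have hneg : ∀ s : ℕ, qint (-n - 1 - s) = -1 * qint (n + 1 + s) := fun s => by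
    rw [neg_one_mul, ← qint_neg]; ring_nf
  rw [qbin_natCast_right, qbin_natCast_right, prod_range_qint_reflect]
  simp only [hneg, prod_mul_distrib, prod_const, card_range, mul_div_assoc]

lemma qbin_neg_one (k : ℕ) : qbin (-1) k = (-1) ^ k := by
  have h := qbin_neg_sub_one 0 k
  rw [zero_add, neg_zero, zero_sub] at h
  rw [h, qbin_natCast_of_le le_rfl, Nat.sub_self, qfactorial_zero, mul_one,
    div_self (qfactorial_ne_zero k), mul_one]

section Sigma1

variable {i j N : ℕ}

lemma qbin_sigma1_product_eq_zero (h : N < i ∨ N < j ∨ i + j < N) :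
    qbin ((i : ℤ) + j) i * qbin ((N : ℤ) - 1 - ((i : ℤ) + j)) ((N : ℤ) - i) *
      qbin (-1) i * qbin N j = 0 := by
  rcases h with h | h | h
  · rw [qbin_of_neg (by omega : (N : ℤ) - i < 0)]; ring
  · rw [qbin_natCast_of_lt h]; ring
  · rw [show (N : ℤ) - 1 - ((i : ℤ) + j) = ((N - 1 - (i + j) : ℕ) : ℤ) by omega,
      show (N : ℤ) - i = ((N - i : ℕ) : ℤ) by omega, qbin_natCast_of_lt (by omega)]
    ring

lemma qbin_sigma1_product_eq (hi : i ≤ N) (hj : j ≤ N) (hN : N ≤ i + j) :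
    qbin ((i : ℤ) + j) i * qbin ((N : ℤ) - 1 - ((i : ℤ) + j)) ((N : ℤ) - i) *
        qbin (-1) i * qbin N j =
      (-1) ^ N * (qfactorial (i + j) * qfactorial N) /
        (qfactorial i * qfactorial j * qfactorial (N - i) * qfactorial (N - j) *
          qfactorial (i + j - N)) := by
  have hsign : ((-1) ^ (N - i) * (-1) ^ i : RatFunc ℚ) = (-1) ^ N := by
    rw [← pow_add, Nat.sub_add_cancel hi]
  rw [show (N : ℤ) - 1 - ((i : ℤ) + j) = -((i + j - N : ℕ) : ℤ) - 1 by omega,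
    show (N : ℤ) - i = ((N - i : ℕ) : ℤ) by omega, qbin_neg_sub_one, ← Nat.cast_add,
    ← Nat.cast_add, show i + j - N + (N - i) = j by omega,
    qbin_natCast_of_le (Nat.le_add_right i j), qbin_natCast_of_le (show N - i ≤ j by omega),
    qbin_natCast_of_le hj, qbin_neg_one,
    ← hsign, show i + j - i = j by omega, show j - (N - i) = i + j - N by omega]
  have := qfactorial_ne_zero j
  field_simp

end Sigma1

theorem qbin_symmetry_sigma1 (i j N : ℕ) :
    qbin ((i : ℤ) + j) i * qbin ((N : ℤ) - 1 - ((i : ℤ) + j)) ((N : ℤ) - i) *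
        qbin (-1) i * qbin N j =
      qbin ((i : ℤ) + j) j * qbin ((N : ℤ) - 1 - ((i : ℤ) + j)) ((N : ℤ) - j) *
        qbin (-1) j * qbin N i := by
  by_cases h : N < i ∨ N < j ∨ i + j < N
  · rw [qbin_sigma1_product_eq_zero h, add_comm (i : ℤ) j,
      qbin_sigma1_product_eq_zero (by omega)]
  · rw [qbin_sigma1_product_eq (by omega) (by omega) (by omega), add_comm (i : ℤ) j,
      qbin_sigma1_product_eq (by omega) (by omega) (by omega), add_comm j i]
    ring
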